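/- Let W, Z_1, Z_2, Z_3, Y be random variables with finite ranges on a common finite probability space. Assume: (independence) I(W ; (Z_1, Z_2, Z_3)) = 0; H(Z_k) = H(W) for k = 1, 2, 3; H(Z_1, Z_2, Z_3) ≥ 2.5 · H(W); (correctness for qualified set {1,2,3}) H(W | (Y, Z_q)) = 0 for q = 1, 2, 3; and I(W ; Y) = 0. Then H(Y) ≥ 2.5 · H(W). -/
import Mathlib


open scoped BigOperators

/-- A finite probability space: a finite sample space `Ω` together with a
probability mass function `p`. -/
structure FinProbSpace : Type 1 where
  Ω : Type
  fin : Fintype Ω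
  p : Ω → ℝ
  nonneg : ∀ ω, 0 ≤ p ω
  sum_one : Finset.sum fin.elems p = 1

namespace FinProbSpace

/-- Probability that the random variable `X` takes the value `s`. -/
noncomputable def prob (μ : FinProbSpace) {S : Type} [DecidableEq S]
    (X : μ.Ω → S) (s : S) : ℝ :=
  letI := μ.fin
  ∑ ω : μ.Ω, if X ω = s then μ.p ω else 0

/-- Shannon entropy of a random variable with finite range. -/
noncomputable def H (μ : FinProbSpace) {S : Type} [Fintype S] [DecidableEq S]
    (X : μ.Ω → S) : ℝ :=
  ∑ s : S, Real.negMulLog (μ.prob X s)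

/-- Conditional Shannon entropy `H(X | Y)`. -/
noncomputable def Hc (μ : FinProbSpace) {S T : Type} [Fintype S] [DecidableEq S]
    [Fintype T] [DecidableEq T] (X : μ.Ω → S) (Y : μ.Ω → T) : ℝ :=
  μ.H (fun ω => (X ω, Y ω)) - μ.H Y

/-- Mutual information `I(X ; Y)`. -/
noncomputable def MI (μ : FinProbSpace) {S T : Type} [Fintype S] [DecidableEq S]
    [Fintype T] [DecidableEq T] (X : μ.Ω → S) (Y : μ.Ω → T) : ℝ :=
  μ.H X + μ.H Y - μ.H (fun ω => (X ω, Y ω))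

/-- Conditional mutual information `I(X ; Y | Z)`. -/
noncomputable def CMI (μ : FinProbSpace) {S T U : Type} [Fintype S] [DecidableEq S]
    [Fintype T] [DecidableEq T] [Fintype U] [DecidableEq U]
    (X : μ.Ω → S) (Y : μ.Ω → T) (Z : μ.Ω → U) : ℝ :=
  μ.H (fun ω => (X ω, Z ω)) + μ.H (fun ω => (Y ω, Z ω))
    - μ.H (fun ω => (X ω, Y ω, Z ω)) - μ.H Z

/-- Independence of two random variables: the joint pmf factorizes. -/
def IndepRV (μ : FinProbSpace) {S T : Type} [DecidableEq S] [DecidableEq T]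
    (X : μ.Ω → S) (Y : μ.Ω → T) : Prop :=
  ∀ s t, μ.prob (fun ω => (X ω, Y ω)) (s, t) = μ.prob X s * μ.prob Y t

end FinProbSpace

attribute [local instance] FinProbSpace.fin

namespace FinProbSpace

variable (μ : FinProbSpace)

lemma prob_def {S : Type} [DecidableEq S] (X : μ.Ω → S) (s : S) :
    μ.prob X s = ∑ ω : μ.Ω, if X ω = s then μ.p ω else 0 := rfl

lemma prob_nonneg {S : Type} [DecidableEq S] (X : μ.Ω → S) (s : S) :
    0 ≤ μ.prob X s :=
  Finset.sum_nonneg fun ω _ => by split <;> simp [μ.nonneg ω]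

lemma sum_p : ∑ ω : μ.Ω, μ.p ω = 1 := μ.sum_one

lemma sum_prob {S : Type} [Fintype S] [DecidableEq S] (X : μ.Ω → S) :
    ∑ s : S, μ.prob X s = 1 := by
  simp only [prob_def]
  rw [Finset.sum_comm]
  simp [Finset.sum_ite_eq, μ.sum_p]

lemma prob_comp {S T : Type} [Fintype S] [DecidableEq S] [DecidableEq T]
    (X : μ.Ω → S) (g : S → T) (t : T) :
    μ.prob (fun ω => g (X ω)) t = ∑ s : S, if g s = t then μ.prob X s else 0 := by
  simp only [prob_def]
  have h : ∀ s : S, (if g s = t then ∑ ω : μ.Ω, if X ω = s then μ.p ω else 0 else 0)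
      = ∑ ω : μ.Ω, if X ω = s then (if g (X ω) = t then μ.p ω else 0) else 0 := by
    intro s
    split
    · exact Finset.sum_congr rfl fun ω _ => by split <;> simp_all
    · exact (Finset.sum_eq_zero fun ω _ => by split <;> simp_all).symm
  rw [Finset.sum_congr rfl fun s _ => h s, Finset.sum_comm]
  exact Finset.sum_congr rfl fun ω _ => by simp [Finset.sum_ite_eq]

lemma negMulLog_add_le {a b : ℝ} (ha : 0 ≤ a) (hb : 0 ≤ b) :
    Real.negMulLog (a + b) ≤ Real.negMulLog a + Real.negMulLog b := by
  unfold Real.negMulLog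
  have h1 : a * Real.log a ≤ a * Real.log (a + b) := by
    rcases eq_or_lt_of_le ha with h | h
    · simp [← h]
    · exact mul_le_mul_of_nonneg_left (Real.log_le_log h (by linarith)) ha
  have h2 : b * Real.log b ≤ b * Real.log (a + b) := by
    rcases eq_or_lt_of_le hb with h | h
    · simp [← h]
    · exact mul_le_mul_of_nonneg_left (Real.log_le_log h (by linarith)) hb
  nlinarith

lemma negMulLog_sum_le {ι : Type*} (s : Finset ι) (f : ι → ℝ)
    (hf : ∀ i ∈ s, 0 ≤ f i) :
    Real.negMulLog (∑ i ∈ s, f i) ≤ ∑ i ∈ s, Real.negMulLog (f i) := by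
  induction s using Finset.cons_induction with
  | empty => simp
  | cons a s ha ih =>
    rw [Finset.sum_cons, Finset.sum_cons]
    have h1 : 0 ≤ f a := hf a (Finset.mem_cons_self a s)
    have h2 : 0 ≤ ∑ i ∈ s, f i :=
      Finset.sum_nonneg fun i hi => hf i (Finset.mem_cons_of_mem hi)
    calc Real.negMulLog (f a + ∑ i ∈ s, f i)
        ≤ Real.negMulLog (f a) + Real.negMulLog (∑ i ∈ s, f i) :=
          negMulLog_add_le h1 h2
      _ ≤ Real.negMulLog (f a) + ∑ i ∈ s, Real.negMulLog (f i) := by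
          gcongr
          exact ih fun i hi => hf i (Finset.mem_cons_of_mem hi)

lemma H_comp_le {S T : Type} [Fintype S] [DecidableEq S] [Fintype T] [DecidableEq T]
    (X : μ.Ω → S) (g : S → T) :
    μ.H (fun ω => g (X ω)) ≤ μ.H X := by
  unfold H
  calc ∑ t : T, Real.negMulLog (μ.prob (fun ω => g (X ω)) t)
      ≤ ∑ t : T, ∑ s ∈ Finset.univ.filter (fun s => g s = t),
          Real.negMulLog (μ.prob X s) := by
        refine Finset.sum_le_sum fun t _ => ?_
        rw [prob_comp, ← Finset.sum_filter]
        exact negMulLog_sum_le _ _ fun s _ => μ.prob_nonneg X s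
    _ = ∑ s : S, Real.negMulLog (μ.prob X s) :=
        Finset.sum_fiberwise _ _ _

lemma H_comp_inj {S T : Type} [Fintype S] [DecidableEq S] [Fintype T] [DecidableEq T]
    (X : μ.Ω → S) (g : S → T) (hg : Function.Injective g) :
    μ.H (fun ω => g (X ω)) = μ.H X := by
  unfold H
  calc ∑ t : T, Real.negMulLog (μ.prob (fun ω => g (X ω)) t)
      = ∑ t : T, ∑ s ∈ Finset.univ.filter (fun s => g s = t),
          Real.negMulLog (μ.prob X s) := by
        refine Finset.sum_congr rfl fun t _ => ?_
        rw [prob_comp, ← Finset.sum_filter]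
        rcases (Finset.univ.filter (fun s => g s = t)).eq_empty_or_nonempty with h | h
        · simp [h]
        · obtain ⟨a, ha⟩ := h
          have hfa : g a = t := (Finset.mem_filter.1 ha).2
          have hsing : Finset.univ.filter (fun s => g s = t) = {a} := by
            apply Finset.eq_singleton_iff_unique_mem.2
            refine ⟨ha, fun b hb => ?_⟩
            exact hg ((Finset.mem_filter.1 hb).2.trans hfa.symm)
          simp [hsing]
    _ = ∑ s : S, Real.negMulLog (μ.prob X s) :=
        Finset.sum_fiberwise _ _ _

end FinProbSpace

namespace FinProbSpace

variable (μ : FinProbSpace)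

lemma sum_rot3 {α β γ M : Type*} [AddCommMonoid M] [Fintype α] [Fintype β] [Fintype γ]
    (f : α → β → γ → M) :
    ∑ c : γ, ∑ a : α, ∑ b : β, f a b c = ∑ a : α, ∑ b : β, ∑ c : γ, f a b c := by
  rw [Finset.sum_comm]
  exact Finset.sum_congr rfl fun a _ => Finset.sum_comm

lemma sum_rot3' {α β γ M : Type*} [AddCommMonoid M] [Fintype α] [Fintype β] [Fintype γ]
    (f : α → β → γ → M) :
    ∑ b : β, ∑ c : γ, ∑ a : α, f a b c = ∑ a : α, ∑ b : β, ∑ c : γ, f a b c := by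
  rw [← sum_rot3]

/-- Submodularity of entropy: `H(A,B,C) + H(C) ≤ H(A,C) + H(B,C)`. -/
lemma submod {S T U : Type} [Fintype S] [DecidableEq S] [Fintype T] [DecidableEq T]
    [Fintype U] [DecidableEq U] (A : μ.Ω → S) (B : μ.Ω → T) (C : μ.Ω → U) :
    μ.H (fun ω => (A ω, B ω, C ω)) + μ.H C
      ≤ μ.H (fun ω => (A ω, C ω)) + μ.H (fun ω => (B ω, C ω)) := by
  classical
  set p : S → T → U → ℝ := fun a b c => μ.prob (fun ω => (A ω, B ω, C ω)) (a, b, c)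
    with hp_def
  have hp : ∀ a b c, 0 ≤ p a b c := fun a b c => μ.prob_nonneg _ _
  set qAC : S → U → ℝ := fun a c => ∑ b, p a b c with hqAC_def
  set qBC : T → U → ℝ := fun b c => ∑ a, p a b c with hqBC_def
  set qC : U → ℝ := fun c => ∑ a, ∑ b, p a b c with hqC_def
  have hqACnn : ∀ a c, 0 ≤ qAC a c := fun a c => Finset.sum_nonneg fun b _ => hp a b c
  have hqBCnn : ∀ b c, 0 ≤ qBC b c := fun b c => Finset.sum_nonneg fun a _ => hp a b c
  have hqCnn : ∀ c, 0 ≤ qC c :=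
    fun c => Finset.sum_nonneg fun a _ => Finset.sum_nonneg fun b _ => hp a b c
  -- marginal identities
  have mAC : ∀ a c, μ.prob (fun ω => (A ω, C ω)) (a, c) = qAC a c := by
    intro a c
    simp only [hqAC_def, hp_def, prob_def]
    rw [Finset.sum_comm]
    refine Finset.sum_congr rfl fun ω _ => ?_
    have hz : ∀ b' ∈ Finset.univ, b' ≠ B ω →
        (if (A ω, B ω, C ω) = (a, b', c) then μ.p ω else 0) = 0 := by
      intro b' _ hb'
      apply if_neg
      intro h
      exact hb' ((congrArg (fun x => x.2.1) h).symm)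
    rw [Finset.sum_eq_single_of_mem (B ω) (Finset.mem_univ _) hz]
    simp [Prod.ext_iff]
  have mBC : ∀ b c, μ.prob (fun ω => (B ω, C ω)) (b, c) = qBC b c := by
    intro b c
    simp only [hqBC_def, hp_def, prob_def]
    rw [Finset.sum_comm]
    refine Finset.sum_congr rfl fun ω _ => ?_
    have hz : ∀ a' ∈ Finset.univ, a' ≠ A ω →
        (if (A ω, B ω, C ω) = (a', b, c) then μ.p ω else 0) = 0 := by
      intro a' _ ha'
      apply if_neg
      intro h
      exact ha' ((congrArg (fun x => x.1) h).symm)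
    rw [Finset.sum_eq_single_of_mem (A ω) (Finset.mem_univ _) hz]
    simp [Prod.ext_iff]
  have mC : ∀ c, μ.prob C c = qC c := by
    intro c
    have h1 : μ.prob C c = ∑ b, μ.prob (fun ω => (B ω, C ω)) (b, c) := by
      simp only [prob_def]
      rw [Finset.sum_comm]
      refine Finset.sum_congr rfl fun ω _ => ?_
      have hz : ∀ b' ∈ Finset.univ, b' ≠ B ω →
          (if (B ω, C ω) = (b', c) then μ.p ω else 0) = 0 := by
        intro b' _ hb'
        apply if_neg
        intro h
        exact hb' ((congrArg (fun x => x.1) h).symm)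
      rw [Finset.sum_eq_single_of_mem (B ω) (Finset.mem_univ _) hz]
      simp [Prod.ext_iff]
    rw [h1]
    have h2 : ∀ b, μ.prob (fun ω => (B ω, C ω)) (b, c) = qBC b c := fun b => mBC b c
    rw [Finset.sum_congr rfl fun b _ => h2 b]
    simp only [hqBC_def, hqC_def]
    exact Finset.sum_comm
  -- entropies as iterated sums
  have HABC : μ.H (fun ω => (A ω, B ω, C ω))
      = ∑ a : S, ∑ b : T, ∑ c : U, Real.negMulLog (p a b c) := by
    unfold H
    rw [Fintype.sum_prod_type]
    exact Finset.sum_congr rfl fun a _ => by rw [Fintype.sum_prod_type]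
  have HAC : μ.H (fun ω => (A ω, C ω))
      = ∑ a : S, ∑ c : U, Real.negMulLog (qAC a c) := by
    unfold H
    rw [Fintype.sum_prod_type]
    exact Finset.sum_congr rfl fun a _ => Finset.sum_congr rfl fun c _ => by rw [mAC]
  have HBC : μ.H (fun ω => (B ω, C ω))
      = ∑ b : T, ∑ c : U, Real.negMulLog (qBC b c) := by
    unfold H
    rw [Fintype.sum_prod_type]
    exact Finset.sum_congr rfl fun b _ => Finset.sum_congr rfl fun c _ => by rw [mBC]
  have HC : μ.H C = ∑ c : U, Real.negMulLog (qC c) :=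
    Finset.sum_congr rfl fun c _ => by rw [mC]
  rw [HABC, HAC, HBC, HC]
  -- marginal entropies as triple sums weighted by p
  have eAC : ∑ a : S, ∑ c : U, Real.negMulLog (qAC a c)
      = ∑ a : S, ∑ b : T, ∑ c : U, -(p a b c * Real.log (qAC a c)) := by
    refine Finset.sum_congr rfl fun a _ => ?_
    rw [Finset.sum_comm]
    refine Finset.sum_congr rfl fun c _ => ?_
    simp only [Real.negMulLog_eq_neg]
    rw [show qAC a c * Real.log (qAC a c) = ∑ b : T, p a b c * Real.log (qAC a c) by
      rw [← Finset.sum_mul]]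
    rw [← Finset.sum_neg_distrib]
  have eBC : ∑ b : T, ∑ c : U, Real.negMulLog (qBC b c)
      = ∑ a : S, ∑ b : T, ∑ c : U, -(p a b c * Real.log (qBC b c)) := by
    rw [← sum_rot3']
    refine Finset.sum_congr rfl fun b _ => Finset.sum_congr rfl fun c _ => ?_
    simp only [Real.negMulLog_eq_neg]
    rw [show qBC b c * Real.log (qBC b c) = ∑ a : S, p a b c * Real.log (qBC b c) by
      rw [← Finset.sum_mul]]
    rw [← Finset.sum_neg_distrib]
  have eC : ∑ c : U, Real.negMulLog (qC c)
      = ∑ a : S, ∑ b : T, ∑ c : U, -(p a b c * Real.log (qC c)) := by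
    rw [← sum_rot3]
    refine Finset.sum_congr rfl fun c _ => ?_
    simp only [Real.negMulLog_eq_neg]
    rw [show qC c * Real.log (qC c) = ∑ a : S, ∑ b : T, p a b c * Real.log (qC c) by
      rw [hqC_def]
      simp only [Finset.sum_mul]]
    rw [← Finset.sum_neg_distrib]
    exact Finset.sum_congr rfl fun a _ => by rw [← Finset.sum_neg_distrib]
  rw [eAC, eBC, eC]
  -- the Gibbs comparison distribution
  set q : S → T → U → ℝ := fun a b c => qAC a c * qBC b c / qC c with hq_def
  have hq0 : ∀ a b c, 0 ≤ q a b c := fun a b c =>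
    div_nonneg (mul_nonneg (hqACnn a c) (hqBCnn b c)) (hqCnn c)
  -- pointwise bound
  have key : ∀ a b c, p a b c - q a b c ≤
      -(p a b c * Real.log (qAC a c)) + -(p a b c * Real.log (qBC b c))
        - Real.negMulLog (p a b c) - -(p a b c * Real.log (qC c)) := by
    intro a b c
    rcases eq_or_lt_of_le (hp a b c) with h0 | h0
    · rw [show p a b c = 0 from h0.symm]
      simp only [Real.negMulLog_zero, zero_mul, neg_zero, zero_sub, sub_zero, add_zero]
      linarith [hq0 a b c]
    · have hAC : 0 < qAC a c :=
        lt_of_lt_of_le h0 (Finset.single_le_sum (fun i _ => hp a i c) (Finset.mem_univ b))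
      have hBC : 0 < qBC b c :=
        lt_of_lt_of_le h0 (Finset.single_le_sum (fun i _ => hp i b c) (Finset.mem_univ a))
      have hC : 0 < qC c :=
        lt_of_lt_of_le hAC (Finset.single_le_sum
          (f := fun i => ∑ j, p i j c)
          (fun i _ => Finset.sum_nonneg fun j _ => hp i j c) (Finset.mem_univ a))
      have hqpos : 0 < q a b c := div_pos (mul_pos hAC hBC) hC
      have hlog : Real.log (q a b c / p a b c) ≤ q a b c / p a b c - 1 :=
        Real.log_le_sub_one_of_pos (div_pos hqpos h0)
      have hmul := mul_le_mul_of_nonneg_left hlog h0.le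
      have e1 : p a b c * Real.log (q a b c / p a b c)
          = p a b c * Real.log (qAC a c) + p a b c * Real.log (qBC b c)
            - p a b c * Real.log (qC c) - p a b c * Real.log (p a b c) := by
        rw [Real.log_div hqpos.ne' h0.ne', hq_def]
        simp only
        rw [Real.log_div (mul_pos hAC hBC).ne' hC.ne', Real.log_mul hAC.ne' hBC.ne']
        ring
      have e2 : p a b c * (q a b c / p a b c - 1) = q a b c - p a b c := by
        rw [mul_sub, mul_one, mul_comm, div_mul_cancel₀ _ h0.ne']
      simp only [Real.negMulLog_eq_neg]
      rw [e1, e2] at hmul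
      linarith
  -- total mass of q equals total mass of p
  have hABq : ∀ c, ∑ a : S, ∑ b : T, q a b c = qC c := by
    intro c
    have hinner : ∀ a, ∑ b : T, q a b c = qAC a c * (∑ b : T, qBC b c) / qC c := by
      intro a
      rw [← Finset.sum_div, ← Finset.mul_sum]
    rw [Finset.sum_congr rfl fun a _ => hinner a]
    have hBsum : ∑ b : T, qBC b c = qC c := by
      simp only [hqBC_def, hqC_def]
      exact Finset.sum_comm
    have hAsum : ∑ a : S, qAC a c = qC c := rfl
    rw [hBsum]
    rw [show (∑ a : S, qAC a c * qC c / qC c) = (∑ a : S, qAC a c) * qC c / qC c by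
      rw [Finset.sum_mul, Finset.sum_div]]
    rw [hAsum]
    rcases eq_or_ne (qC c) 0 with h | h
    · simp [h]
    · rw [mul_div_assoc, div_self h, mul_one]
  have hsumq : ∑ a : S, ∑ b : T, ∑ c : U, q a b c = ∑ a : S, ∑ b : T, ∑ c : U, p a b c := by
    rw [← sum_rot3, ← sum_rot3 (f := p)]
    exact Finset.sum_congr rfl fun c _ => (hABq c).trans rfl
  have big : (0 : ℝ) ≤ ∑ a : S, ∑ b : T, ∑ c : U,
      (-(p a b c * Real.log (qAC a c)) + -(p a b c * Real.log (qBC b c))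
        - Real.negMulLog (p a b c) - -(p a b c * Real.log (qC c))) := by
    have h1 : ∑ a : S, ∑ b : T, ∑ c : U, (p a b c - q a b c) = 0 := by
      simp only [Finset.sum_sub_distrib]
      rw [hsumq]
      ring
    calc (0 : ℝ) = ∑ a : S, ∑ b : T, ∑ c : U, (p a b c - q a b c) := h1.symm
      _ ≤ _ := by
        refine Finset.sum_le_sum fun a _ => Finset.sum_le_sum fun b _ =>
          Finset.sum_le_sum fun c _ => key a b c
  rw [show ∑ a : S, ∑ b : T, ∑ c : U,
      (-(p a b c * Real.log (qAC a c)) + -(p a b c * Real.log (qBC b c))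
        - Real.negMulLog (p a b c) - -(p a b c * Real.log (qC c)))
      = (∑ a : S, ∑ b : T, ∑ c : U, -(p a b c * Real.log (qAC a c)))
        + (∑ a : S, ∑ b : T, ∑ c : U, -(p a b c * Real.log (qBC b c)))
        - (∑ a : S, ∑ b : T, ∑ c : U, Real.negMulLog (p a b c))
        - (∑ a : S, ∑ b : T, ∑ c : U, -(p a b c * Real.log (qC c))) by
    simp only [Finset.sum_add_distrib, Finset.sum_sub_distrib]] at big
  linarith

end FinProbSpace

namespace FinProbSpace

variable (μ : FinProbSpace)

lemma H_unit : μ.H (fun _ : μ.Ω => (() : Unit)) = 0 := by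
  have hp1 : μ.prob (fun _ : μ.Ω => (() : Unit)) () = 1 := by
    simp [prob_def, μ.sum_p]
  simp [H, hp1]

/-- Subadditivity of entropy: `H(A,B) ≤ H(A) + H(B)`. -/
lemma subadd {S T : Type} [Fintype S] [DecidableEq S] [Fintype T] [DecidableEq T]
    (A : μ.Ω → S) (B : μ.Ω → T) :
    μ.H (fun ω => (A ω, B ω)) ≤ μ.H A + μ.H B := by
  have h := μ.submod A B (fun _ => (() : Unit))
  have e1 : μ.H (fun ω => (A ω, B ω, (() : Unit))) = μ.H (fun ω => (A ω, B ω)) :=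
    μ.H_comp_inj (fun ω => (A ω, B ω)) (fun x => (x.1, x.2, ()))
      (by rintro ⟨a, b⟩ ⟨a', b'⟩ hab
          simp only [Prod.mk.injEq] at hab ⊢
          tauto)
  have e2 : μ.H (fun ω => (A ω, (() : Unit))) = μ.H A :=
    μ.H_comp_inj A (fun a => (a, ()))
      (by intro a a' hab
          simpa using congrArg (fun x => x.1) hab)
  have e3 : μ.H (fun ω => (B ω, (() : Unit))) = μ.H B :=
    μ.H_comp_inj B (fun b => (b, ()))
      (by intro b b' hbb
          simpa using congrArg (fun x => x.1) hbb)
  have e0 := μ.H_unit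
  linarith

end FinProbSpace

open FinProbSpace

/-- **Bandwidth bound of Theorem 4 from the joint key size bound**: with `W`
independent of `(Z_1, Z_2, Z_3)`, all keys of full entropy `H(Z_k) = H(W)`,
joint key size `H(Z_1,Z_2,Z_3) ≥ 2.5·H(W)`, correctness
`H(W | (Y, Z_q)) = 0` for q = 1, 2, 3, and `I(W ; Y) = 0`, the broadcast
signal satisfies `H(Y) ≥ 2.5·H(W)`. -/
theorem bandwidth_from_joint_key_bound
    (μ : FinProbSpace) {SW SZ1 SZ2 SZ3 SY : Type}
    [Fintype SW] [DecidableEq SW] [Fintype SZ1] [DecidableEq SZ1]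
    [Fintype SZ2] [DecidableEq SZ2] [Fintype SZ3] [DecidableEq SZ3]
    [Fintype SY] [DecidableEq SY]
    (W : μ.Ω → SW) (Z1 : μ.Ω → SZ1) (Z2 : μ.Ω → SZ2) (Z3 : μ.Ω → SZ3)
    (Y : μ.Ω → SY)
    (hInd : μ.MI W (fun ω => (Z1 ω, Z2 ω, Z3 ω)) = 0)
    (hZ1 : μ.H Z1 = μ.H W) (hZ2 : μ.H Z2 = μ.H W) (hZ3 : μ.H Z3 = μ.H W)
    (hJoint : μ.H (fun ω => (Z1 ω, Z2 ω, Z3 ω)) ≥ 2.5 * μ.H W)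
    (hCorr1 : μ.Hc W (fun ω => (Y ω, Z1 ω)) = 0)
    (hCorr2 : μ.Hc W (fun ω => (Y ω, Z2 ω)) = 0)
    (hCorr3 : μ.Hc W (fun ω => (Y ω, Z3 ω)) = 0)
    (hSecY : μ.MI W Y = 0) :
    μ.H Y ≥ 2.5 * μ.H W := by
    classical
  have hWY : μ.H (fun ω => (W ω, Y ω)) = μ.H W + μ.H Y := by
    unfold MI at hSecY
    linarith
  -- Step 1 : each key is determined by (W, Y), i.e. H(Z_k, (W,Y)) = H(W,Y)
  have step1 : ∀ {SZ : Type} [Fintype SZ] [DecidableEq SZ] (Zk : μ.Ω → SZ),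
      μ.H Zk = μ.H W → μ.Hc W (fun ω => (Y ω, Zk ω)) = 0 →
      μ.H (fun ω => (Zk ω, (W ω, Y ω))) = μ.H (fun ω => (W ω, Y ω)) := by
    intro SZ _ _ Zk hZ hCorr
    have hb : μ.H (fun ω => (W ω, (Y ω, Zk ω))) = μ.H (fun ω => (Y ω, Zk ω)) := by
      unfold Hc at hCorr
      linarith
    have hc : μ.H (fun ω => (Y ω, Zk ω)) ≤ μ.H Y + μ.H W := by
      have h := μ.subadd Y Zk
      rw [hZ] at h
      exact h
    have hd : μ.H (fun ω => (W ω, Y ω)) ≤ μ.H (fun ω => (W ω, (Y ω, Zk ω))) :=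
      μ.H_comp_le (fun ω => (W ω, (Y ω, Zk ω))) (fun x => (x.1, x.2.1))
    have heq : μ.H (fun ω => (W ω, (Y ω, Zk ω))) = μ.H (fun ω => (Zk ω, (W ω, Y ω))) :=
      μ.H_comp_inj (fun ω => (Zk ω, (W ω, Y ω))) (fun x => (x.2.1, (x.2.2, x.1)))
        (by rintro ⟨z, w, y⟩ ⟨z', w', y'⟩ h
            simp only [Prod.mk.injEq] at h ⊢
            tauto)
    linarith
  have h1 := step1 Z1 hZ1 hCorr1
  have h2 := step1 Z2 hZ2 hCorr2
  have h3 := step1 Z3 hZ3 hCorr3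
  -- Step 2 : H(Z1, Z2, (W,Y)) ≤ H(W,Y)
  have s12 : μ.H (fun ω => (Z1 ω, Z2 ω, (W ω, Y ω))) ≤ μ.H (fun ω => (W ω, Y ω)) := by
    have h := μ.submod Z1 Z2 (fun ω => (W ω, Y ω))
    linarith
  have h12' : μ.H (fun ω => ((Z1 ω, Z2 ω), (W ω, Y ω)))
      = μ.H (fun ω => (Z1 ω, Z2 ω, (W ω, Y ω))) :=
    μ.H_comp_inj (fun ω => (Z1 ω, Z2 ω, (W ω, Y ω))) (fun x => ((x.1, x.2.1), x.2.2))
      (by rintro ⟨z1, z2, wy⟩ ⟨z1', z2', wy'⟩ h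
          simp only [Prod.mk.injEq] at h ⊢
          tauto)
  -- Step 3 : H(Z3, (Z1,Z2), (W,Y)) ≤ H(W,Y)
  have s123 : μ.H (fun ω => (Z3 ω, (Z1 ω, Z2 ω), (W ω, Y ω))) ≤ μ.H (fun ω => (W ω, Y ω)) := by
    have h := μ.submod Z3 (fun ω => (Z1 ω, Z2 ω)) (fun ω => (W ω, Y ω))
    linarith
  -- Step 4 : project down to (W, (Z1,Z2,Z3))
  have hproj : μ.H (fun ω => (W ω, (Z1 ω, Z2 ω, Z3 ω)))
      ≤ μ.H (fun ω => (Z3 ω, (Z1 ω, Z2 ω), (W ω, Y ω))) :=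
    μ.H_comp_le (fun ω => (Z3 ω, (Z1 ω, Z2 ω), (W ω, Y ω)))
      (fun x => (x.2.2.1, (x.2.1.1, x.2.1.2, x.1)))
  have hWZ : μ.H (fun ω => (W ω, (Z1 ω, Z2 ω, Z3 ω)))
      = μ.H W + μ.H (fun ω => (Z1 ω, Z2 ω, Z3 ω)) := by
    unfold MI at hInd
    linarith
  linarith
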